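/- Let F₀(z) = Σ_{n≥0} aₙ zⁿ ∈ ℚ[[z]] with aₙ = Σ_{k=0}^{n} (3n)!/((k!)³((n−k)!)³). Then 𝒫F₀ = 0 for the operator 𝒫 = Θ⁴ − 3z·(7Θ² + 7Θ + 2)(3Θ+1)(3Θ+2) − 72z²·(3Θ+5)(3Θ+4)(3Θ+2)(3Θ+1); explicitly, Θ⁴F₀ = 3z·[(7Θ²+7Θ+2)(3Θ+1)(3Θ+2)F₀] + 72z²·[(3Θ+5)(3Θ+4)(3Θ+2)(3Θ+1)F₀], where in each bracket the polynomial in Θ is applied to F₀ and the result is then multiplied by 3z, respectively 72z². -/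

import Mathlib

open Nat

/-- The logarithmic derivative operator `Θ = z·d/dz` on formal power series over `ℚ`,
sending `Σ aₙ zⁿ` to `Σ n·aₙ zⁿ`. -/
noncomputable def theta : Module.End ℚ (PowerSeries ℚ) where
  toFun f := PowerSeries.mk fun n => (n : ℚ) * PowerSeries.coeff n f
  map_add' f g := by
    ext n
    simp [mul_add]
  map_smul' c f := by
    ext n
    simp
    ring

/-- The monodromy invariant period `F₀(z) = Σ_{n≥0} aₙ zⁿ` with
`aₙ = Σ_{k=0}^{n} (3n)!/((k!)³((n−k)!)³)`, for the diagonal one-parameter family of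
Calabi–Yau hypersurfaces of degree `(3,3)` in `ℙ²×ℙ²`. -/
noncomputable def F0 : PowerSeries ℚ :=
  PowerSeries.mk fun n =>
    ∑ k ∈ Finset.range (n + 1), ((3 * n)! : ℚ) / (((k ! : ℚ)) ^ 3 * (((n - k)! : ℚ)) ^ 3)

/-! ### Auxiliary definitions and lemmas -/

/-- WZ certificate polynomial for the Franel recurrence. -/
def Qc (x j : ℚ) : ℚ :=
  4*j^3*x^2 + 8*j^3*x + 4*j^3 - 18*j^2*x^3 - 66*j^2*x^2 - 78*j^2*x - 30*j^2
  + 27*j*x^4 + 147*j*x^3 + 291*j*x^2 + 249*j*x + 78*j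
  - 14*x^5 - 102*x^4 - 290*x^3 - 402*x^2 - 272*x - 72

/-- WZ certificate function. -/
noncomputable def Gc (n k : ℕ) : ℚ :=
  (k : ℚ)^3 * Qc (n : ℚ) (k : ℚ) * (((n+2).choose k : ℚ))^3

/-- The Franel-type sum `Σ C(n,k)³`. -/
noncomputable def Sq (n : ℕ) : ℚ := ∑ k ∈ Finset.range (n+1), ((n.choose k : ℚ))^3

lemma local_id (n k : ℕ) (hk : k ≤ n + 2) :
    ((n:ℚ)+1)^3 * ((n:ℚ)+2)^3 *
      ( ((n:ℚ)+2)^2 * (((n+2).choose k : ℚ))^3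
        - (7*(n:ℚ)^2+21*(n:ℚ)+16) * (((n+1).choose k : ℚ))^3
        - 8*((n:ℚ)+1)^2 * ((n.choose k : ℚ))^3 )
    = Gc n (k+1) - Gc n k := by
  have hsub : ((n + 2 - k : ℕ) : ℚ) = (n:ℚ) + 2 - (k:ℚ) := by
    rw [Nat.cast_sub hk]; push_cast; ring
  -- column relation for the certificate shift
  have E2 : (((n+2).choose (k+1) : ℚ)) * ((k:ℚ)+1)
      = (((n+2).choose k : ℚ)) * ((n:ℚ)+2-(k:ℚ)) := by
    have h := Nat.choose_succ_right_eq (n+2) k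
    have hq := congrArg (fun m : ℕ => (m : ℚ)) h
    push_cast [hsub] at hq
    linarith [hq]
  -- row relation between C(n+1,k) and C(n+2,k)
  have E1 : (((n+1).choose k : ℚ)) * ((n:ℚ)+2)
      = (((n+2).choose k : ℚ)) * ((n:ℚ)+2-(k:ℚ)) := by
    have h : (n+1).choose k * (n+2) = (n+2).choose k * (n+2-k) :=
      Nat.choose_mul_succ_eq (n+1) k
    have hq := congrArg (fun m : ℕ => (m : ℚ)) h
    push_cast [hsub] at hq
    linarith [hq]
  -- row relation between C(n,k) and C(n+2,k)
  have E0 : ((n.choose k : ℚ)) * (((n:ℚ)+1) * ((n:ℚ)+2))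
      = (((n+2).choose k : ℚ)) * (((n:ℚ)+2-(k:ℚ)) * ((n:ℚ)+1-(k:ℚ))) := by
    rcases le_or_gt k (n+1) with h1 | h1
    · have hA : n.choose k * (n+1) = (n+1).choose k * (n+1-k) :=
        Nat.choose_mul_succ_eq n k
      have hq := congrArg (fun m : ℕ => (m : ℚ)) hA
      push_cast [Nat.cast_sub h1] at hq
      linear_combination ((n:ℚ)+2) * hq + ((n:ℚ)+1-(k:ℚ)) * E1
    · have hk2 : k = n + 2 := by omega
      subst hk2
      have c0 : n.choose (n+2) = 0 := Nat.choose_eq_zero_of_lt (by omega)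
      rw [c0]
      push_cast
      ring
  -- cubes of relations
  have E2c : (((n+2).choose (k+1) : ℚ))^3 * ((k:ℚ)+1)^3
      = (((n+2).choose k : ℚ))^3 * ((n:ℚ)+2-(k:ℚ))^3 := by
    rw [← mul_pow, ← mul_pow, E2]
  have E1c : (((n+1).choose k : ℚ))^3 * ((n:ℚ)+2)^3
      = (((n+2).choose k : ℚ))^3 * ((n:ℚ)+2-(k:ℚ))^3 := by
    rw [← mul_pow, ← mul_pow, E1]
  have E0c : ((n.choose k : ℚ))^3 * (((n:ℚ)+1) * ((n:ℚ)+2))^3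
      = (((n+2).choose k : ℚ))^3 * (((n:ℚ)+2-(k:ℚ)) * ((n:ℚ)+1-(k:ℚ)))^3 := by
    rw [← mul_pow, ← mul_pow, E0]
  simp only [Gc, Qc]
  push_cast
  linear_combination (-(7*(n:ℚ)^2+21*(n:ℚ)+16)*((n:ℚ)+1)^3) * E1c
    + (-8*((n:ℚ)+1)^2) * E0c
    + (-(4*((k:ℚ)+1)^3*(n:ℚ)^2 + 8*((k:ℚ)+1)^3*(n:ℚ) + 4*((k:ℚ)+1)^3
        - 18*((k:ℚ)+1)^2*(n:ℚ)^3 - 66*((k:ℚ)+1)^2*(n:ℚ)^2 - 78*((k:ℚ)+1)^2*(n:ℚ)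
        - 30*((k:ℚ)+1)^2
        + 27*((k:ℚ)+1)*(n:ℚ)^4 + 147*((k:ℚ)+1)*(n:ℚ)^3 + 291*((k:ℚ)+1)*(n:ℚ)^2
        + 249*((k:ℚ)+1)*(n:ℚ) + 78*((k:ℚ)+1)
        - 14*(n:ℚ)^5 - 102*(n:ℚ)^4 - 290*(n:ℚ)^3 - 402*(n:ℚ)^2 - 272*(n:ℚ) - 72)) * E2c

/-- The Franel recurrence. -/
lemma franel (n : ℕ) :
    ((n:ℚ)+2)^2 * Sq (n+2)
      = (7*(n:ℚ)^2+21*(n:ℚ)+16) * Sq (n+1) + 8*((n:ℚ)+1)^2 * Sq n := by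
  have hsum : ∑ k ∈ Finset.range (n+3),
      (((n:ℚ)+1)^3 * ((n:ℚ)+2)^3 *
        ( ((n:ℚ)+2)^2 * (((n+2).choose k : ℚ))^3
          - (7*(n:ℚ)^2+21*(n:ℚ)+16) * (((n+1).choose k : ℚ))^3
          - 8*((n:ℚ)+1)^2 * ((n.choose k : ℚ))^3 )) = 0 := by
    rw [Finset.sum_congr rfl fun k hk =>
      local_id n k (by simpa using Nat.lt_succ_iff.mp (Finset.mem_range.mp hk))]
    rw [Finset.sum_range_sub (f := Gc n)]
    have h1 : Gc n (n+3) = 0 := by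
      simp [Gc, Nat.choose_eq_zero_of_lt (by omega : n + 2 < n + 3)]
    have h2 : Gc n 0 = 0 := by simp [Gc]
    rw [h1, h2, sub_zero]
  rw [← Finset.mul_sum] at hsum
  have hD : ((n:ℚ)+1)^3 * ((n:ℚ)+2)^3 ≠ 0 := by positivity
  have hinner := (mul_eq_zero.mp hsum).resolve_left hD
  rw [Finset.sum_sub_distrib, Finset.sum_sub_distrib, ← Finset.mul_sum, ← Finset.mul_sum,
    ← Finset.mul_sum] at hinner
  -- extend the shorter sums
  have e1 : Sq (n+1) = ∑ k ∈ Finset.range (n+3), (((n+1).choose k : ℚ))^3 := by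
    rw [Sq, Finset.sum_range_succ (n := n+2),
      Nat.choose_eq_zero_of_lt (by omega : n + 1 < n + 2)]
    push_cast; ring
  have e0 : Sq n = ∑ k ∈ Finset.range (n+3), ((n.choose k : ℚ))^3 := by
    rw [Sq, Finset.sum_range_succ (n := n+2), Finset.sum_range_succ (n := n+1),
      Nat.choose_eq_zero_of_lt (by omega : n < n + 1),
      Nat.choose_eq_zero_of_lt (by omega : n < n + 2)]
    push_cast; ring
  rw [Sq, e1, e0]
  linarith [hinner]

/-- The coefficients of `F₀`. -/
noncomputable def aa (n : ℕ) : ℚ :=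
  ∑ k ∈ Finset.range (n + 1), ((3 * n)! : ℚ) / (((k ! : ℚ)) ^ 3 * (((n - k)! : ℚ)) ^ 3)

lemma aa_eq (n : ℕ) : ((n ! : ℚ))^3 * aa n = ((3*n)! : ℚ) * Sq n := by
  rw [aa, Sq, Finset.mul_sum, Finset.mul_sum]
  refine Finset.sum_congr rfl fun k hk => ?_
  have hkn : k ≤ n := Nat.lt_succ_iff.mp (Finset.mem_range.mp hk)
  rw [Nat.cast_choose ℚ hkn]
  have h1 : ((k ! : ℚ)) ≠ 0 := Nat.cast_ne_zero.mpr (Nat.factorial_ne_zero k)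
  have h2 : (((n-k) ! : ℚ)) ≠ 0 := Nat.cast_ne_zero.mpr (Nat.factorial_ne_zero (n-k))
  have h3 : ((n ! : ℚ)) ≠ 0 := Nat.cast_ne_zero.mpr (Nat.factorial_ne_zero n)
  field_simp

lemma fact3_succ (n : ℕ) : ((3*(n+1))! : ℚ)
    = (3*(n:ℚ)+3) * (3*(n:ℚ)+2) * (3*(n:ℚ)+1) * ((3*n)! : ℚ) := by
  have h : 3*(n+1) = (3*n+2)+1 := by ring
  rw [h, Nat.factorial_succ, show 3*n+2 = (3*n+1)+1 from rfl, Nat.factorial_succ,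
    show 3*n+1 = (3*n)+1 from rfl, Nat.factorial_succ]
  push_cast; ring

lemma fact_succ_q (n : ℕ) : (((n+1)) ! : ℚ) = ((n:ℚ)+1) * ((n)! : ℚ) := by
  rw [Nat.factorial_succ]; push_cast; ring

/-- The main recurrence for the coefficients. -/
lemma aa_rec (n : ℕ) :
    ((n:ℚ)+2)^4 * aa (n+2)
      = 3*(7*((n:ℚ)+1)^2+7*((n:ℚ)+1)+2)*(3*((n:ℚ)+1)+1)*(3*((n:ℚ)+1)+2) * aa (n+1)
      + 72*(3*(n:ℚ)+5)*(3*(n:ℚ)+4)*(3*(n:ℚ)+2)*(3*(n:ℚ)+1) * aa n := by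
  have h2 := aa_eq (n+2)
  have h1 := aa_eq (n+1)
  have h0 := aa_eq n
  rw [fact_succ_q (n+1), fact_succ_q n] at h2
  rw [fact_succ_q n] at h1
  rw [fact3_succ (n+1), fact3_succ n] at h2
  rw [fact3_succ n] at h1
  have hfr := franel n
  have ht : ((n ! : ℚ)) ≠ 0 := Nat.cast_ne_zero.mpr (Nat.factorial_ne_zero n)
  have hD : (((n:ℚ)+1)*((n:ℚ)+2)*((n ! : ℚ)))^3 ≠ 0 := by positivity
  apply mul_left_cancel₀ hD
  push_cast at h2 h1 h0 ⊢
  linear_combination (((n:ℚ)+2)^4) * h2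
    - (3*(7*((n:ℚ)+1)^2+7*((n:ℚ)+1)+2)*(3*((n:ℚ)+1)+1)*(3*((n:ℚ)+1)+2)*((n:ℚ)+2)^3) * h1
    - (72*(3*(n:ℚ)+5)*(3*(n:ℚ)+4)*(3*(n:ℚ)+2)*(3*(n:ℚ)+1)*(((n:ℚ)+1)*((n:ℚ)+2))^3) * h0
    + (((n:ℚ)+2)^2*(3*(n:ℚ)+6)*(3*(n:ℚ)+5)*(3*(n:ℚ)+4)*(3*(n:ℚ)+3)*(3*(n:ℚ)+2)*(3*(n:ℚ)+1)
        *((3*n)! : ℚ)) * hfr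

lemma coeff_theta (n : ℕ) (f : PowerSeries ℚ) :
    PowerSeries.coeff n (theta f) = (n : ℚ) * PowerSeries.coeff n f := by
  simp [theta]

lemma coeff_F0 (n : ℕ) : PowerSeries.coeff n F0 = aa n := by
  simp [F0, aa]

lemma end_two (x : PowerSeries ℚ) :
    (2 : Module.End ℚ (PowerSeries ℚ)) x = (2:ℚ) • x := by
  rw [show (2 : Module.End ℚ (PowerSeries ℚ)) x = (2:ℕ) • x from rfl,
    ← Nat.cast_smul_eq_nsmul ℚ]
  norm_num
lemma end_four (x : PowerSeries ℚ) :
    (4 : Module.End ℚ (PowerSeries ℚ)) x = (4:ℚ) • x := by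
  rw [show (4 : Module.End ℚ (PowerSeries ℚ)) x = (4:ℕ) • x from rfl,
    ← Nat.cast_smul_eq_nsmul ℚ]
  norm_num
lemma end_five (x : PowerSeries ℚ) :
    (5 : Module.End ℚ (PowerSeries ℚ)) x = (5:ℚ) • x := by
  rw [show (5 : Module.End ℚ (PowerSeries ℚ)) x = (5:ℕ) • x from rfl,
    ← Nat.cast_smul_eq_nsmul ℚ]
  norm_num

/-- `F₀` satisfies `𝒫F₀ = 0` for the Picard–Fuchs operator
`𝒫 = Θ⁴ − 3z(7Θ²+7Θ+2)(3Θ+1)(3Θ+2) − 72z²(3Θ+5)(3Θ+4)(3Θ+2)(3Θ+1)`: explicitly,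
`Θ⁴F₀ = 3z·[(7Θ²+7Θ+2)(3Θ+1)(3Θ+2)F₀] + 72z²·[(3Θ+5)(3Θ+4)(3Θ+2)(3Θ+1)F₀]`. -/
theorem diagonal_picard_fuchs :
    (theta ^ 4) F0 =
      (3 : PowerSeries ℚ) * PowerSeries.X *
        (((((7 : ℚ) • theta ^ 2 + (7 : ℚ) • theta + 2) * ((3 : ℚ) • theta + 1) *
          ((3 : ℚ) • theta + 2) : Module.End ℚ (PowerSeries ℚ))) F0) +
      (72 : PowerSeries ℚ) * PowerSeries.X ^ 2 *
        (((((3 : ℚ) • theta + 5) * ((3 : ℚ) • theta + 4) * ((3 : ℚ) • theta + 2) *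
          ((3 : ℚ) • theta + 1) : Module.End ℚ (PowerSeries ℚ))) F0) := by
  have aa0 : aa 0 = 1 := by simp [aa]
  have aa1 : aa 1 = 12 := by
    simp [aa, Finset.sum_range_succ]
    norm_num [Nat.factorial]
  have hop1 : ∀ m : ℕ, PowerSeries.coeff m
      (((((7 : ℚ) • theta ^ 2 + (7 : ℚ) • theta + 2) * ((3 : ℚ) • theta + 1) *
        ((3 : ℚ) • theta + 2) : Module.End ℚ (PowerSeries ℚ))) F0)
      = (7*(m:ℚ)^2+7*(m:ℚ)+2)*(3*(m:ℚ)+1)*(3*(m:ℚ)+2) * aa m := by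
    intro m
    simp only [Module.End.mul_apply, LinearMap.add_apply, LinearMap.smul_apply,
      Module.End.one_apply, end_two, end_four, end_five, pow_succ, pow_zero, one_mul, map_add, map_smul,
      coeff_theta, coeff_F0, smul_eq_mul, map_nsmul, nsmul_eq_mul]
    ring

  have hop2 : ∀ m : ℕ, PowerSeries.coeff m
      (((((3 : ℚ) • theta + 5) * ((3 : ℚ) • theta + 4) * ((3 : ℚ) • theta + 2) *
        ((3 : ℚ) • theta + 1) : Module.End ℚ (PowerSeries ℚ))) F0)
      = (3*(m:ℚ)+5)*(3*(m:ℚ)+4)*(3*(m:ℚ)+2)*(3*(m:ℚ)+1) * aa m := by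
    intro m
    simp only [Module.End.mul_apply, LinearMap.add_apply, LinearMap.smul_apply,
      Module.End.one_apply, end_two, end_four, end_five, pow_succ, pow_zero, one_mul,
      map_add, map_smul, coeff_theta, coeff_F0, smul_eq_mul, map_nsmul, nsmul_eq_mul]
    ring
  have hth4 : ∀ m : ℕ, PowerSeries.coeff m ((theta ^ 4) F0) = (m:ℚ)^4 * aa m := by
    intro m
    simp only [pow_succ, pow_zero, one_mul, Module.End.mul_apply, Module.End.one_apply,
      coeff_theta, coeff_F0]
    ring
  ext n
  rw [map_add, hth4 n]
  rw [show (3 : PowerSeries ℚ) * PowerSeries.X *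
        (((((7 : ℚ) • theta ^ 2 + (7 : ℚ) • theta + 2) * ((3 : ℚ) • theta + 1) *
          ((3 : ℚ) • theta + 2) : Module.End ℚ (PowerSeries ℚ))) F0)
      = PowerSeries.X * ((3 : PowerSeries ℚ) *
        (((((7 : ℚ) • theta ^ 2 + (7 : ℚ) • theta + 2) * ((3 : ℚ) • theta + 1) *
          ((3 : ℚ) • theta + 2) : Module.End ℚ (PowerSeries ℚ))) F0)) by ring]
  rw [show (72 : PowerSeries ℚ) * PowerSeries.X ^ 2 *
        (((((3 : ℚ) • theta + 5) * ((3 : ℚ) • theta + 4) * ((3 : ℚ) • theta + 2) *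
          ((3 : ℚ) • theta + 1) : Module.End ℚ (PowerSeries ℚ))) F0)
      = PowerSeries.X ^ 2 * ((72 : PowerSeries ℚ) *
        (((((3 : ℚ) • theta + 5) * ((3 : ℚ) • theta + 4) * ((3 : ℚ) • theta + 2) *
          ((3 : ℚ) • theta + 1) : Module.End ℚ (PowerSeries ℚ))) F0)) by ring]
  rw [show (3 : PowerSeries ℚ) = PowerSeries.C 3 from (map_ofNat PowerSeries.C 3).symm,
    show (72 : PowerSeries ℚ) = PowerSeries.C 72 from (map_ofNat PowerSeries.C 72).symm]
  match n with
  | 0 =>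
    simp only [PowerSeries.coeff_zero_eq_constantCoeff, map_mul, PowerSeries.constantCoeff_X,
      map_pow]
    push_cast
    ring
  | 1 =>
    have hX2 : ∀ p : PowerSeries ℚ, PowerSeries.coeff 1 (PowerSeries.X ^ 2 * p) = 0 := by
      intro p
      rw [pow_two, mul_assoc, PowerSeries.coeff_succ_X_mul]
      simp [PowerSeries.coeff_zero_eq_constantCoeff]
    rw [PowerSeries.coeff_succ_X_mul, PowerSeries.coeff_C_mul, hop1 0, hX2, aa0, aa1]
    norm_num
  | (n+2) =>
    rw [show n+2 = n+1+1 from rfl, PowerSeries.coeff_succ_X_mul,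
      show n+1+1 = n+2 from rfl, show (n+2) = n + 2 from rfl]
    rw [PowerSeries.coeff_X_pow_mul]
    rw [PowerSeries.coeff_C_mul, PowerSeries.coeff_C_mul, hop1 (n+1), hop2 n]
    push_cast
    linear_combination aa_rec n
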